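/- arXiv:1205.4056 — 3 statements merged into one kernel-verified Lean document; each statement's English description precedes it below -/
import Mathlib

section
/- If a compactly supported integrable vector-valued function φ : ℝ → ℝ^r satisfies the two-direction refinement equation φ(x) = √d · Σ_k [P⁺_k φ(dx − k) + P⁻_k φ(k − dx)] (finite sum), then its j-th continuous moment m_j = ∫ x^j φ(x) dx satisfies m_j = d^{−j} Σ_{ℓ=0}^{j} C(j,ℓ) [M⁺_{j−ℓ} + (−1)^ℓ M⁻_{j−ℓ}] m_ℓ, where M⁺_i = (1/√d) Σ_k k^i P⁺_k and M⁻_i = (1/√d) Σ_k k^i P⁻_k. -/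
/-! Substitute the refinement equation into `m j = ∫ x ^ j • φ x` and change variables
`y = d x - k` (resp. `y = k - d x`) in each term: `x ^ j` becomes `d⁻ʲ (y + k) ^ j`
(resp. `d⁻ʲ (k - y) ^ j`), and the binomial expansion writes every term through the moments
`m ℓ`, `ℓ ≤ j`, the reflection contributing the sign `(-1) ^ ℓ`. -/

open MeasureTheory Finset

lemma neg_pow_sub_div_neg_pow {K : Type*} [Field K] {ℓ j : ℕ} (h : ℓ ≤ j) (k D : K) :
    (-k) ^ (j - ℓ) / (-D) ^ j = (-1) ^ ℓ * (k ^ (j - ℓ) / D ^ j) := by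
  obtain ⟨i, rfl⟩ := Nat.exists_eq_add_of_le h
  rw [Nat.add_sub_cancel_left, neg_pow, neg_pow D, pow_add]
  have h1 : ((-1 : K) ^ ℓ)⁻¹ = (-1) ^ ℓ := by rw [← inv_pow, inv_neg, inv_one]
  have h2 : ((-1 : K) ^ i) * ((-1) ^ i)⁻¹ = 1 := mul_inv_cancel₀ (pow_ne_zero _ (by norm_num))
  simp only [div_eq_mul_inv, mul_inv, h1]
  linear_combination (-1) ^ ℓ * k ^ i * (D ^ (ℓ + i))⁻¹ * h2

section AffineMoments

variable {E : Type*} [NormedAddCommGroup E] [NormedSpace ℝ E]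

lemma div_pow_smul_eq_sum (a b y : ℝ) (v : E) (j : ℕ) :
    ((y - b) / a) ^ j • v =
      ∑ ℓ ∈ range (j + 1), ((j.choose ℓ : ℝ) * (-b) ^ (j - ℓ) / a ^ j) • y ^ ℓ • v := by
  rw [sub_eq_add_neg, div_pow, add_pow, sum_div, sum_smul]
  refine sum_congr rfl fun ℓ _ => ?_
  rw [smul_smul]
  ring_nf

variable {f : ℝ → E} {a : ℝ} (b : ℝ) (j : ℕ)

lemma pow_smul_comp_affine_eq_sum (ha : a ≠ 0) (x : ℝ) :
    x ^ j • f (a * x + b) = ∑ ℓ ∈ range (j + 1),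
      ((j.choose ℓ : ℝ) * (-b) ^ (j - ℓ) / a ^ j) • (a * x + b) ^ ℓ • f (a * x + b) := by
  rw [← div_pow_smul_eq_sum, add_sub_cancel_right, mul_div_cancel_left₀ x ha]

variable (hf : ∀ j : ℕ, Integrable (fun x : ℝ => x ^ j • f x))
include hf

lemma integrable_pow_smul_comp_affine (ha : a ≠ 0) :
    Integrable (fun x : ℝ => x ^ j • f (a * x + b)) := by
  simp_rw [pow_smul_comp_affine_eq_sum b j ha]
  exact ((integrable_finsetSum _ fun ℓ _ => (hf ℓ).smul _).comp_add_right b).comp_mul_left' ha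

lemma integral_pow_smul_comp_affine (ha : a ≠ 0) :
    ∫ x : ℝ, x ^ j • f (a * x + b) = |a|⁻¹ • ∑ ℓ ∈ range (j + 1),
      ((j.choose ℓ : ℝ) * (-b) ^ (j - ℓ) / a ^ j) • ∫ y : ℝ, y ^ ℓ • f y := by
  simp_rw [pow_smul_comp_affine_eq_sum b j ha]
  rw [Measure.integral_comp_mul_left (fun y => ∑ ℓ ∈ range (j + 1),
      ((j.choose ℓ : ℝ) * (-b) ^ (j - ℓ) / a ^ j) • (y + b) ^ ℓ • f (y + b)) a,
    integral_add_right_eq_self (fun y => ∑ ℓ ∈ range (j + 1),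
      ((j.choose ℓ : ℝ) * (-b) ^ (j - ℓ) / a ^ j) • y ^ ℓ • f y) b,
    integral_finsetSum _ fun ℓ _ => by exact (hf ℓ).smul _, abs_inv]
  simp_rw [integral_smul]

end AffineMoments

theorem integral_pow_smul_eq_of_two_direction_refinement {E : Type*} [NormedAddCommGroup E]
    [NormedSpace ℝ E] [CompleteSpace E] {φ : ℝ → E}
    (hφ : ∀ j : ℕ, Integrable (fun x : ℝ => x ^ j • φ x)) {D : ℝ} (hD : 0 < D)
    (s : Finset ℤ) (A B : ℤ → E →L[ℝ] E)
    (href : ∀ x : ℝ, φ x = ∑ k ∈ s, (A k (φ (D * x - k)) + B k (φ (k - D * x)))) (j : ℕ) :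
    ∫ x : ℝ, x ^ j • φ x = (D ^ (j + 1))⁻¹ • ∑ ℓ ∈ range (j + 1), (j.choose ℓ : ℝ) •
      (∑ k ∈ s, (k : ℝ) ^ (j - ℓ) • (A k + (-1 : ℝ) ^ ℓ • B k)) (∫ x : ℝ, x ^ ℓ • φ x) := by
  have hP : ∀ k : ℤ, (fun x : ℝ => x ^ j • φ (D * x - k)) = fun x => x ^ j • φ (D * x + -k) :=
    fun k => by simp only [sub_eq_add_neg]
  have hM : ∀ k : ℤ, (fun x : ℝ => x ^ j • φ (k - D * x)) = fun x => x ^ j • φ (-D * x + k) :=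
    fun k => by simp only [neg_mul, neg_add_eq_sub]
  have hPint : ∀ k : ℤ, Integrable (fun x : ℝ => x ^ j • φ (D * x - k)) := fun k => by
    rw [hP]; exact integrable_pow_smul_comp_affine _ j hφ hD.ne'
  have hMint : ∀ k : ℤ, Integrable (fun x : ℝ => x ^ j • φ (k - D * x)) := fun k => by
    rw [hM]; exact integrable_pow_smul_comp_affine _ j hφ (neg_ne_zero.2 hD.ne')
  have hsplit : ∫ x : ℝ, x ^ j • φ x = ∑ k ∈ s, (A k (∫ x : ℝ, x ^ j • φ (D * x - k)) +
      B k (∫ x : ℝ, x ^ j • φ (k - D * x))) := by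
    simp_rw [fun x => congrArg (x ^ j • ·) (href x), smul_sum, smul_add, ← map_smul]
    rw [integral_finsetSum _ fun k _ => by
      exact ((A k).integrable_comp (hPint k)).add ((B k).integrable_comp (hMint k))]
    refine sum_congr rfl fun k _ => ?_
    rw [integral_add ((A k).integrable_comp (hPint k)) ((B k).integrable_comp (hMint k)),
      (A k).integral_comp_comm (hPint k), (B k).integral_comp_comm (hMint k)]
  have hmP : ∀ k : ℤ, ∫ x : ℝ, x ^ j • φ (D * x - k) = |D|⁻¹ • ∑ ℓ ∈ range (j + 1),
      ((j.choose ℓ : ℝ) * (-(-k)) ^ (j - ℓ) / D ^ j) • ∫ y : ℝ, y ^ ℓ • φ y := fun k => by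
    rw [hP]; exact integral_pow_smul_comp_affine _ j hφ hD.ne'
  have hmM : ∀ k : ℤ, ∫ x : ℝ, x ^ j • φ (k - D * x) = |-D|⁻¹ • ∑ ℓ ∈ range (j + 1),
      ((j.choose ℓ : ℝ) * (-k) ^ (j - ℓ) / (-D) ^ j) • ∫ y : ℝ, y ^ ℓ • φ y := fun k => by
    rw [hM]; exact integral_pow_smul_comp_affine _ j hφ (neg_ne_zero.2 hD.ne')
  rw [hsplit]
  simp only [FunLike.coe_sum, Finset.sum_apply, smul_sum]
  rw [sum_comm]
  refine sum_congr rfl fun k _ => ?_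
  simp only [hmP, hmM, map_smul, map_sum, smul_sum, ← sum_add_distrib]
  refine sum_congr rfl fun ℓ hℓ => ?_
  simp only [add_apply, FunLike.coe_smul, Pi.smul_apply, smul_add, smul_smul]
  rw [neg_neg, abs_neg, abs_of_pos hD, mul_div_assoc _ ((-(k : ℝ)) ^ (j - ℓ)),
    neg_pow_sub_div_neg_pow (Nat.lt_succ_iff.1 (mem_range.1 hℓ))]
  congr 1 <;> congr 1 <;> field_simp <;> ring

theorem stmt_0_general (d r : ℕ) (hd : 2 ≤ d)
    (s : Finset ℤ)
    (Pp Pm : ℤ → Matrix (Fin r) (Fin r) ℝ)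
    (φ : ℝ → Fin r → ℝ)
    (hint : ∀ j : ℕ, Integrable (fun x : ℝ => x ^ j • φ x))
    (href : ∀ x : ℝ, φ x =
      Real.sqrt d • ∑ k ∈ s,
        ((Pp k).mulVec (φ (d * x - k)) + (Pm k).mulVec (φ (k - d * x))))
    (m : ℕ → Fin r → ℝ)
    (hm : ∀ j : ℕ, m j = ∫ x : ℝ, x ^ j • φ x)
    (Mp Mm : ℕ → Matrix (Fin r) (Fin r) ℝ)
    (hMp : ∀ i : ℕ, Mp i = (Real.sqrt d)⁻¹ • ∑ k ∈ s, ((k : ℝ) ^ i) • Pp k)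
    (hMm : ∀ i : ℕ, Mm i = (Real.sqrt d)⁻¹ • ∑ k ∈ s, ((k : ℝ) ^ i) • Pm k) :
    ∀ j : ℕ, m j = ((d : ℝ) ^ j)⁻¹ •
      ∑ ℓ ∈ Finset.range (j + 1),
        (j.choose ℓ : ℝ) •
          (Mp (j - ℓ) + ((-1 : ℝ) ^ ℓ) • Mm (j - ℓ)).mulVec (m ℓ) := by
  intro j
  have hD : (0 : ℝ) < d := by positivity
  set T : Matrix (Fin r) (Fin r) ℝ ≃ₗ[ℝ] ((Fin r → ℝ) →L[ℝ] (Fin r → ℝ)) :=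
    Matrix.toLin'.trans LinearMap.toContinuousLinearMap
  have hT : ∀ M v, T M v = M.mulVec v := fun _ _ => rfl
  have href' : ∀ x : ℝ, φ x = ∑ k ∈ s,
      (T (√d • Pp k) (φ (d * x - k)) + T (√d • Pm k) (φ (k - d * x))) := fun x => by
    simp only [hT, Matrix.smul_mulVec, ← smul_add, ← smul_sum, ← href]
  have hsqrt : (√d : ℝ) = d * (√d)⁻¹ := by
    rw [eq_mul_inv_iff_mul_eq₀ (by positivity), Real.mul_self_sqrt hD.le]
  have hcoef : ∀ i ℓ : ℕ, ∑ k ∈ s, (k : ℝ) ^ i • (T (√d • Pp k) + (-1 : ℝ) ^ ℓ • T (√d • Pm k)) =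
      T ((d : ℝ) • (Mp i + (-1 : ℝ) ^ ℓ • Mm i)) := fun i ℓ => by
    simp only [← map_smul, ← map_add, ← map_sum, hMp, hMm, smul_sum, ← sum_add_distrib]
    congr 1
    refine sum_congr rfl fun k _ => ?_
    conv_lhs => rw [hsqrt]
    module
  rw [hm j, integral_pow_smul_eq_of_two_direction_refinement hint hD s _ _ href' j]
  simp only [← hm, hcoef, hT, Matrix.smul_mulVec, smul_sum, smul_smul]
  refine sum_congr rfl fun ℓ _ => ?_
  congr 1
  field_simp
  ring

/-- Moment recursion (by separation) for a two-direction multiscaling function. -/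
theorem stmt_0 (d r : ℕ) (hd : 2 ≤ d) (hr : 1 ≤ r)
    (s : Finset ℤ)
    (Pp Pm : ℤ → Matrix (Fin r) (Fin r) ℝ)
    (hsupp : ∀ k : ℤ, k ∉ s → Pp k = 0 ∧ Pm k = 0)
    (φ : ℝ → Fin r → ℝ)
    (hcpt : HasCompactSupport φ)
    (hint : ∀ j : ℕ, Integrable (fun x : ℝ => x ^ j • φ x))
    (href : ∀ x : ℝ, φ x =
      Real.sqrt d • ∑ k ∈ s,
        ((Pp k).mulVec (φ (d * x - k)) + (Pm k).mulVec (φ (k - d * x))))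
    (m : ℕ → Fin r → ℝ)
    (hm : ∀ j : ℕ, m j = ∫ x : ℝ, x ^ j • φ x)
    (Mp Mm : ℕ → Matrix (Fin r) (Fin r) ℝ)
    (hMp : ∀ i : ℕ, Mp i = (Real.sqrt d)⁻¹ • ∑ k ∈ s, ((k : ℝ) ^ i) • Pp k)
    (hMm : ∀ i : ℕ, Mm i = (Real.sqrt d)⁻¹ • ∑ k ∈ s, ((k : ℝ) ^ i) • Pm k) :
    ∀ j : ℕ, m j = ((d : ℝ) ^ j)⁻¹ •
      ∑ ℓ ∈ Finset.range (j + 1),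
        (j.choose ℓ : ℝ) •
          (Mp (j - ℓ) + ((-1 : ℝ) ^ ℓ) • Mm (j - ℓ)).mulVec (m ℓ) :=
  stmt_0_general d r hd s Pp Pm φ hint href m hm Mp Mm hMp hMm
end

section
/- Let φ : ℝ → ℝ^r satisfy the two-direction refinement equation with coefficients P⁺_k, P⁻_k. Define Φ : ℝ → ℝ^{2r} by Φ(x) = [φ(x), φ(−x)]ᵀ. Then Φ satisfies the one-direction matrix refinement equation Φ(x) = √d · Σ_k L_k Φ(dx − k), where L_k is the 2r×2r block matrix [[P⁺_k, P⁻_k], [P⁻_{−k}, P⁺_{−k}]]. -/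
open Finset

/-- The doubled function Φ(x) = [φ(x), φ(−x)]ᵀ satisfies the deduced
one-direction matrix refinement equation with block coefficients
L_k = [[P⁺_k, P⁻_k], [P⁻_{−k}, P⁺_{−k}]]. -/
theorem stmt_2 (d r : ℕ) (hd : 2 ≤ d) (hr : 1 ≤ r)
    (s : Finset ℤ)
    (Pp Pm : ℤ → Matrix (Fin r) (Fin r) ℝ)
    (hsupp : ∀ k : ℤ, k ∉ s → Pp k = 0 ∧ Pm k = 0)
    (hsym : ∀ k : ℤ, k ∈ s ↔ -k ∈ s)
    (φ : ℝ → Fin r → ℝ)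
    (href : ∀ x : ℝ, φ x =
      Real.sqrt d • ∑ k ∈ s,
        ((Pp k).mulVec (φ (d * x - k)) + (Pm k).mulVec (φ (k - d * x))))
    (Φ : ℝ → (Fin r ⊕ Fin r) → ℝ)
    (hΦ : ∀ x : ℝ, Φ x = Sum.elim (φ x) (φ (-x)))
    (L : ℤ → Matrix (Fin r ⊕ Fin r) (Fin r ⊕ Fin r) ℝ)
    (hL : ∀ k : ℤ, L k = Matrix.fromBlocks (Pp k) (Pm k) (Pm (-k)) (Pp (-k))) :
    ∀ x : ℝ, Φ x = Real.sqrt d • ∑ k ∈ s, (L k).mulVec (Φ (d * x - k)) := by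

  intro x
  have key : ∀ k : ℤ, (L k).mulVec (Φ (d * x - k)) =
      Sum.elim ((Pp k).mulVec (φ (d * x - k)) + (Pm k).mulVec (φ (k - d * x)))
        ((Pm (-k)).mulVec (φ (d * x - k)) + (Pp (-k)).mulVec (φ (k - d * x))) := by
    intro k
    have hneg : -(d * x - k) = k - d * x := by ring
    rw [hL, hΦ, hneg, Matrix.fromBlocks_mulVec]
    simp
  rw [hΦ]
  funext i
  cases i with
  | inl j =>
    have h1 := congrFun (href x) j
    simp only [Pi.smul_apply, Finset.sum_apply, smul_eq_mul] at h1 ⊢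
    rw [Sum.elim_inl, h1]
    congr 1
    apply Finset.sum_congr rfl
    intro k _
    rw [key k, Sum.elim_inl]
  | inr j =>
    have h1 := congrFun (href (-x)) j
    simp only [Pi.smul_apply, Finset.sum_apply, smul_eq_mul] at h1 ⊢
    rw [Sum.elim_inr, h1]
    congr 1
    rw [show ∑ k ∈ s, ((L k).mulVec (Φ (d * x - k))) (Sum.inr j) =
        ∑ k ∈ s, (((Pm (-k)).mulVec (φ (d * x - k)) + (Pp (-k)).mulVec (φ (k - d * x))) j)
      from Finset.sum_congr rfl fun k _ => by rw [key k, Sum.elim_inr]]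
    refine Finset.sum_bij' (fun k _ => -k) (fun k _ => -k) ?_ ?_ ?_ ?_ ?_
    · intro k hk; exact (hsym k).mp hk
    · intro k hk; rw [← neg_neg k] at hk; exact (hsym (-k)).mpr hk
    · intro k _; ring
    · intro k _; ring
    · intro k _
      have e1 : (d : ℝ) * (-x) - k = -k - d * x := by ring
      have e2 : (k : ℝ) - d * (-x) = d * x - -k := by ring
      rw [e1, e2, neg_neg, add_comm]
      simp only [Int.cast_neg]
end

section
/- For the scalar example wavelet with d = 2, N_0^+ = (1+√7)/8, N_0^− = −(1+√7)/8, N_1^+ = −3√7/8, N_1^− = √7/8, N_2^+ = (−6+9√7)/8, N_2^− = (2−√7)/8, and scaling moments m_0 = √2/2, m_1 = (7√2 − √14)/12, m_2 = (28√2 − 7√14)/36, the wavelet moments n_j = 2^{−j} Σ_{ℓ=0}^{j} C(j,ℓ)[N^+_{j−ℓ} + (−1)^ℓ N^−_{j−ℓ}] m_ℓ satisfy n_0 = 0, n_1 = 0, and n_2 = (4√2 − √14)/48 ≠ 0. -/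
open Finset

/-- Example 5.1, wavelet moments: n₀ = 0, n₁ = 0, n₂ = (4√2 − √14)/48 ≠ 0. -/
theorem stmt_13
    (Np Nm : ℕ → ℝ) (m n : ℕ → ℝ)
    (hNp0 : Np 0 = (1 + Real.sqrt 7) / 8)
    (hNm0 : Nm 0 = -(1 + Real.sqrt 7) / 8)
    (hNp1 : Np 1 = -(3 * Real.sqrt 7) / 8)
    (hNm1 : Nm 1 = Real.sqrt 7 / 8)
    (hNp2 : Np 2 = (-6 + 9 * Real.sqrt 7) / 8)
    (hNm2 : Nm 2 = (2 - Real.sqrt 7) / 8)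
    (hm0 : m 0 = Real.sqrt 2 / 2)
    (hm1 : m 1 = (7 * Real.sqrt 2 - Real.sqrt 14) / 12)
    (hm2 : m 2 = (28 * Real.sqrt 2 - 7 * Real.sqrt 14) / 36)
    (hn : ∀ j : ℕ, j ≤ 2 → n j = ((2 : ℝ) ^ j)⁻¹ *
      ∑ ℓ ∈ Finset.range (j + 1),
        (j.choose ℓ : ℝ) * ((Np (j - ℓ) + (-1 : ℝ) ^ ℓ * Nm (j - ℓ)) * m ℓ)) :
    n 0 = 0 ∧ n 1 = 0 ∧
    n 2 = (4 * Real.sqrt 2 - Real.sqrt 14) / 48 ∧ n 2 ≠ 0 := by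

  have h27 : Real.sqrt 2 * Real.sqrt 7 = Real.sqrt 14 := by
    rw [← Real.sqrt_mul (by norm_num)]; norm_num
  have h7sq : Real.sqrt 7 ^ 2 = 7 := Real.sq_sqrt (by norm_num)
  have h714 : Real.sqrt 7 * Real.sqrt 14 = 7 * Real.sqrt 2 := by
    rw [← h27, show Real.sqrt 7 * (Real.sqrt 2 * Real.sqrt 7) = Real.sqrt 7 ^ 2 * Real.sqrt 2 from by ring, h7sq]
  have h0 := hn 0 (by norm_num)
  have h1 := hn 1 (by norm_num)
  have h2 := hn 2 (by norm_num)
  simp [Finset.sum_range_succ, hNp0, hNm0, hNp1, hNm1, hNp2, hNm2, hm0, hm1, hm2] at h0 h1 h2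
  have hn0 : n 0 = 0 := by rw [h0]; ring
  have hn1 : n 1 = 0 := by rw [h1]; linear_combination (1/96) * h27 + (-1/96) * h714
  have hn2 : n 2 = (4 * Real.sqrt 2 - Real.sqrt 14) / 48 := by
    rw [h2]; linear_combination (-1/48) * h27 + (1/48) * h714
  refine ⟨hn0, hn1, hn2, ?_⟩
  rw [hn2]
  have h2pos : (1:ℝ) < Real.sqrt 2 := by
    have := Real.lt_sqrt (x := 1) (y := 2) (by norm_num)
    nlinarith [Real.sq_sqrt (by norm_num : (0:ℝ) ≤ 2), Real.sqrt_nonneg 2]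
  have h14 : Real.sqrt 14 < 4 * Real.sqrt 2 := by
    nlinarith [Real.sq_sqrt (by norm_num : (0:ℝ) ≤ 14), Real.sq_sqrt (by norm_num : (0:ℝ) ≤ 2),
      Real.sqrt_nonneg 14, Real.sqrt_nonneg 2]
  have : (0:ℝ) < (4 * Real.sqrt 2 - Real.sqrt 14) / 48 := by linarith
  exact this.ne'
end
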